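/- Let ≻₁ and ≻₂ be two strict linear orders on a finite set A of m alternatives, let rk₁(a) = |{b ∈ A : b ≻₁ a}|, and consider the embedding with E(v₁) = (−m², 0) and E(a) = (rk₁(a), rk₂(a)) where 0 ≤ rk₂(a) ≤ m − 1. Then for any two alternatives a, b with a ≻₁ b one has ‖E(a) − E(v₁)‖ < m² + rk₁(a) + 1 ≤ m² + rk₁(b) ≤ ‖E(b) − E(v₁)‖, where ‖·‖ is the Euclidean distance in ℝ²; in particular a ≻₁ b implies ‖E(a) − E(v₁)‖ < ‖E(b) − E(v₁)‖. -/

import Mathlib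

/-- The point `(x, y)` in the Euclidean plane `ℝ²`. -/
noncomputable def pt (x y : ℝ) : EuclideanSpace ℝ (Fin 2) :=
  (WithLp.equiv 2 (Fin 2 → ℝ)).symm ![x, y]

/-!
The first coordinate of `E(b) − E(v₁)` is `m² + rk₁ b`, which bounds the distance from below.
The second coordinate of `E(a) − E(v₁)` lies in `[0, m]`, so its square is less than
`2 (m² + rk₁ a) + 1`, and hence the distance exceeds `m² + rk₁ a` by less than `1`.
The middle inequality holds because the set of alternatives preferred to `a` is a proper subset
of the set of those preferred to `b`: it misses `a` itself.
-/

theorem Nat.card_lt_card_of_rel {α : Type*} [Finite α] {r : α → α → Prop} [IsStrictOrder α r]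
    {a b : α} (hab : r a b) : Nat.card {c // r c a} < Nat.card {c // r c b} :=
  Set.ncard_lt_ncard (s := {c | r c a}) (t := {c | r c b})
    ⟨fun c hca => _root_.trans hca hab, fun h => irrefl a (h hab)⟩

theorem dist_pt_pt (x₁ y₁ x₂ y₂ : ℝ) :
    dist (pt x₁ y₁) (pt x₂ y₂) = √((x₁ - x₂) ^ 2 + (y₁ - y₂) ^ 2) := by
  simp [EuclideanSpace.dist_eq, Fin.sum_univ_two, pt, Real.dist_eq, sq_abs]

theorem sub_le_dist_pt_pt (x₁ y₁ x₂ y₂ : ℝ) : x₁ - x₂ ≤ dist (pt x₁ y₁) (pt x₂ y₂) := by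
  rw [dist_pt_pt]
  exact (le_abs_self _).trans (Real.abs_le_sqrt (le_add_of_nonneg_right (sq_nonneg _)))

theorem dist_pt_pt_lt {x₁ y₁ x₂ y₂ : ℝ} (h : (y₁ - y₂) ^ 2 < 2 * (x₁ - x₂) + 1) :
    dist (pt x₁ y₁) (pt x₂ y₂) < x₁ - x₂ + 1 := by
  have hpos : 0 < x₁ - x₂ + 1 := by nlinarith [sq_nonneg (y₁ - y₂)]
  rw [dist_pt_pt, Real.sqrt_lt' hpos]
  linarith

theorem rank_embedding_first_voter_chain_general
    {A : Type*} [Fintype A]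
    (pref₁ : A → A → Prop)
    (hpref₁ : IsStrictTotalOrder A pref₁)
    (m : ℕ)
    (rk₁ : A → ℕ)
    (hrk₁ : ∀ a, rk₁ a = Nat.card {b : A // pref₁ b a})
    (rk₂ : A → ℕ)
    (hrk₂ : ∀ a, rk₂ a ≤ m - 1)
    (Ev : EuclideanSpace ℝ (Fin 2))
    (hEv : Ev = pt (-(m : ℝ) ^ 2) 0)
    (EA : A → EuclideanSpace ℝ (Fin 2))
    (hEA : ∀ a, EA a = pt (rk₁ a) (rk₂ a)) :
    ∀ a b : A, pref₁ a b →
      dist (EA a) Ev < (m : ℝ) ^ 2 + rk₁ a + 1 ∧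
      (m : ℝ) ^ 2 + rk₁ a + 1 ≤ (m : ℝ) ^ 2 + rk₁ b ∧
      (m : ℝ) ^ 2 + rk₁ b ≤ dist (EA b) Ev ∧
      dist (EA a) Ev < dist (EA b) Ev := by
  intro a b hab
  have hrk : rk₁ a < rk₁ b := by
    have := hpref₁
    rw [hrk₁, hrk₁]
    exact Nat.card_lt_card_of_rel hab
  have hmid : (m : ℝ) ^ 2 + rk₁ a + 1 ≤ (m : ℝ) ^ 2 + rk₁ b := by
    have : (rk₁ a : ℝ) + 1 ≤ rk₁ b := by exact_mod_cast hrk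
    linarith
  have hnear : dist (EA a) Ev < (m : ℝ) ^ 2 + rk₁ a + 1 := by
    have hy : (rk₂ a : ℝ) ≤ m := by exact_mod_cast (hrk₂ a).trans (Nat.sub_le m 1)
    rw [hEA, hEv]
    convert dist_pt_pt_lt (y₂ := 0) ?_ using 1
    · ring
    · nlinarith [(rk₂ a).cast_nonneg (α := ℝ), (rk₁ a).cast_nonneg (α := ℝ)]
  have hfar : (m : ℝ) ^ 2 + rk₁ b ≤ dist (EA b) Ev := by
    rw [hEA, hEv]
    linarith [sub_le_dist_pt_pt (rk₁ b) (rk₂ b) (-(m : ℝ) ^ 2) 0]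
  exact ⟨hnear, hmid, hfar, hnear.trans_le (hmid.trans hfar)⟩

/-- Let `≻₁` be a strict linear order on a finite set `A` of `m` alternatives, let
`rk₁ a` be the number of alternatives strictly preferred to `a` by voter `1`, and
consider the embedding placing voter `1` at `(−m², 0)` and each alternative `a` at
`(rk₁ a, rk₂ a)`, where `0 ≤ rk₂ a ≤ m − 1`.  Then for any alternatives `a, b` with
`a ≻₁ b` we have the chain
`‖E(a) − E(v₁)‖ < m² + rk₁(a) + 1 ≤ m² + rk₁(b) ≤ ‖E(b) − E(v₁)‖`;
in particular `a ≻₁ b` implies `‖E(a) − E(v₁)‖ < ‖E(b) − E(v₁)‖`. -/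
theorem rank_embedding_first_voter_chain
    {A : Type*} [Fintype A]
    (pref₁ : A → A → Prop)
    (hpref₁ : IsStrictTotalOrder A pref₁)
    (m : ℕ) (hm : Fintype.card A = m)
    (rk₁ : A → ℕ)
    (hrk₁ : ∀ a, rk₁ a = Nat.card {b : A // pref₁ b a})
    (rk₂ : A → ℕ)
    (hrk₂ : ∀ a, rk₂ a ≤ m - 1)
    (Ev : EuclideanSpace ℝ (Fin 2))
    (hEv : Ev = pt (-(m : ℝ) ^ 2) 0)
    (EA : A → EuclideanSpace ℝ (Fin 2))
    (hEA : ∀ a, EA a = pt (rk₁ a) (rk₂ a)) :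
    ∀ a b : A, pref₁ a b →
      dist (EA a) Ev < (m : ℝ) ^ 2 + rk₁ a + 1 ∧
      (m : ℝ) ^ 2 + rk₁ a + 1 ≤ (m : ℝ) ^ 2 + rk₁ b ∧
      (m : ℝ) ^ 2 + rk₁ b ≤ dist (EA b) Ev ∧
      dist (EA a) Ev < dist (EA b) Ev :=
  rank_embedding_first_voter_chain_general pref₁ hpref₁ m rk₁ hrk₁ rk₂ hrk₂ Ev hEv EA hEA
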